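/- arXiv:2107.04344 — 6 statements merged into one kernel-verified Lean document; each statement's English description precedes it below -/
import Mathlib

section
/- Let Ω be the subset of ℝ² consisting of pairs (Y, W) with W² < ε²(1 + Y²), for a fixed ε > 0. Then Ω is connected and its convex hull is all of ℝ². -/
/-!
Ω is star-convex about the origin, since for t ∈ [0, 1] we have
1 + (tY)² = t²(1 + Y²) + (1 - t²) ≥ t²(1 + Y²); hence it is path connected. Every horizontal line
meets Ω in both of its ends (where |W| ≤ ε |Y|), so each point lies on a horizontal segment
with endpoints in Ω.
-/

open Set

section ConvexHull

variable {𝕜 E : Type*} [Field 𝕜] [LinearOrder 𝕜] [IsStrictOrderedRing 𝕜]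
  [AddCommGroup E] [Module 𝕜 E]

theorem convexHull_eq_univ_of_forall_not_bddAbove_of_not_bddBelow {s : Set (𝕜 × E)}
    (hAbove : ∀ w, ¬BddAbove {y | (y, w) ∈ s}) (hBelow : ∀ w, ¬BddBelow {y | (y, w) ∈ s}) :
    convexHull 𝕜 s = univ := by
  refine eq_univ_of_forall fun ⟨y, w⟩ ↦ ?_
  obtain ⟨a, ha, hay⟩ := not_bddBelow_iff.1 (hBelow w) y
  obtain ⟨b, hb, hyb⟩ := not_bddAbove_iff.1 (hAbove w) y
  have hseg : (y, w) ∈ segment 𝕜 (a, w) (b, w) := by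
    rw [← Prod.image_mk_segment_left, segment_eq_Icc (hay.trans hyb).le]
    exact mem_image_of_mem _ ⟨hay.le, hyb.le⟩
  exact segment_subset_convexHull (x := (a, w)) (y := (b, w)) ha hb hseg

end ConvexHull

def hyperbolicRegion (ε : ℝ) : Set (ℝ × ℝ) := {p | p.2 ^ 2 < ε ^ 2 * (1 + p.1 ^ 2)}

namespace hyperbolicRegion

variable {ε : ℝ}

theorem zero_mem (hε : ε ≠ 0) : (0 : ℝ × ℝ) ∈ hyperbolicRegion ε := by
  show (0 : ℝ) ^ 2 < ε ^ 2 * (1 + 0 ^ 2)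
  simpa using pow_pos (abs_pos.2 hε) 2

theorem starConvex_zero : StarConvex ℝ 0 (hyperbolicRegion ε) := by
  rintro ⟨Y, W⟩ hp a t ha ht hat
  change W ^ 2 < ε ^ 2 * (1 + Y ^ 2) at hp
  simp only [hyperbolicRegion, mem_ofPred_eq, smul_zero, zero_add, Prod.smul_mk, smul_eq_mul]
  have hε : 0 < ε ^ 2 := by nlinarith [sq_nonneg W, sq_nonneg Y]
  have ht1 : t ≤ 1 := by linarith
  -- ε²(1 + t²Y²) - t²W² = ε²(1 - t²) + t²(ε²(1 + Y²) - W²), and the two terms cannot both vanish.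
  rcases ht.lt_or_eq with ht0 | rfl
  · nlinarith [mul_nonneg hε.le (mul_nonneg (sub_nonneg.2 ht1) (add_nonneg ht ht)),
      mul_pos (mul_pos ht0 ht0) (sub_pos.2 hp)]
  · simpa using hε

theorem isConnected (hε : ε ≠ 0) : IsConnected (hyperbolicRegion ε) :=
  (starConvex_zero.isPathConnected (zero_mem hε)).isConnected

theorem mk_mem_of_abs_le (hε : 0 < ε) {Y W : ℝ} (h : |W| ≤ ε * |Y|) :
    (Y, W) ∈ hyperbolicRegion ε := by
  have hW : W ^ 2 ≤ ε ^ 2 * Y ^ 2 := by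
    rw [← sq_abs W, ← sq_abs Y, ← mul_pow]
    exact pow_le_pow_left₀ (abs_nonneg W) h 2
  show W ^ 2 < ε ^ 2 * (1 + Y ^ 2)
  nlinarith [pow_pos hε 2]

theorem not_bddAbove_row (hε : 0 < ε) (W : ℝ) : ¬BddAbove {Y | (Y, W) ∈ hyperbolicRegion ε} := by
  refine fun hbdd ↦ not_bddAbove_Ici (|W| / ε) (hbdd.mono fun Y (hY : |W| / ε ≤ Y) ↦ ?_)
  refine mk_mem_of_abs_le hε ?_
  rw [div_le_iff₀' hε] at hY
  exact hY.trans (mul_le_mul_of_nonneg_left (le_abs_self Y) hε.le)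

theorem not_bddBelow_row (hε : 0 < ε) (W : ℝ) : ¬BddBelow {Y | (Y, W) ∈ hyperbolicRegion ε} := by
  refine fun hbdd ↦ not_bddBelow_Iic (-(|W| / ε)) (hbdd.mono fun Y (hY : Y ≤ -(|W| / ε)) ↦ ?_)
  refine mk_mem_of_abs_le hε ?_
  rw [le_neg, div_le_iff₀' hε] at hY
  exact hY.trans (mul_le_mul_of_nonneg_left (neg_le_abs Y) hε.le)

theorem convexHull_eq_univ (hε : 0 < ε) : convexHull ℝ (hyperbolicRegion ε) = univ :=
  convexHull_eq_univ_of_forall_not_bddAbove_of_not_bddBelow (not_bddAbove_row hε)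
    (not_bddBelow_row hε)

end hyperbolicRegion

theorem stmt_0 (ε : ℝ) (hε : 0 < ε)
    (Ω : Set (ℝ × ℝ))
    (hΩ : Ω = {p : ℝ × ℝ | p.2 ^ 2 < ε ^ 2 * (1 + p.1 ^ 2)}) :
    IsConnected Ω ∧ convexHull ℝ Ω = Set.univ := by
  rw [hΩ]
  exact ⟨hyperbolicRegion.isConnected hε.ne', hyperbolicRegion.convexHull_eq_univ hε⟩
end

section
/- For any positive real ε and any real numbers κ > 0, η > 0 and vector m₀ ∈ ℝⁿ, the set {(a, b) ∈ ℝ × ℝⁿ | ‖b - a·m₀‖² - κ²a² < η²} is nonempty and its convex hull is all of ℝ × ℝⁿ (where ℝⁿ carries the Euclidean norm). -/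
theorem stmt_1 (n : ℕ) (ε κ η : ℝ) (hκ : 0 < κ) (hη : 0 < η) (hε : 0 < ε)
    (m₀ : EuclideanSpace ℝ (Fin n))
    (S : Set (ℝ × EuclideanSpace ℝ (Fin n)))
    (hS : S = {p : ℝ × EuclideanSpace ℝ (Fin n) |
      ‖p.2 - p.1 • m₀‖ ^ 2 - κ ^ 2 * p.1 ^ 2 < η ^ 2}) :
    S.Nonempty ∧ convexHull ℝ S = Set.univ := by
  subst hS
  constructor
  · exact ⟨(0, 0), by simp; positivity⟩
  · apply Set.eq_univ_of_forall
    rintro ⟨a, b⟩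
    obtain ⟨c, hc⟩ : ∃ c, c = ‖b - a • m₀‖ := ⟨_, rfl⟩
    have hc0 : 0 ≤ c := hc ▸ norm_nonneg _
    obtain ⟨t, ht⟩ : ∃ t : ℝ, t = |a| + c / κ + 1 := ⟨_, rfl⟩
    have key : ∀ s : ℝ, c ^ 2 < κ ^ 2 * (a + s) ^ 2 →
        ((a + s, b + s • m₀) : ℝ × EuclideanSpace ℝ (Fin n)) ∈
        {p : ℝ × EuclideanSpace ℝ (Fin n) |
          ‖p.2 - p.1 • m₀‖ ^ 2 - κ ^ 2 * p.1 ^ 2 < η ^ 2} := by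
      intro s hs
      have : b + s • m₀ - (a + s) • m₀ = b - a • m₀ := by
        rw [add_smul]; abel
      simp only [Set.mem_setOf_eq, this, ← hc]
      nlinarith [sq_nonneg η]
    have habs : -|a| ≤ a ∧ a ≤ |a| := abs_le.mp le_rfl
    have hck : c / κ * κ = c := div_mul_cancel₀ c hκ.ne'
    have hta : c / κ + 1 ≤ a + t := by rw [ht]; linarith [habs.1]
    have htb : a + (-t) ≤ -(c / κ + 1) := by rw [ht]; linarith [habs.2]
    have h1 : c ^ 2 < κ ^ 2 * (a + t) ^ 2 := by
      have h : c + κ ≤ κ * (a + t) := by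
        have := mul_le_mul_of_nonneg_left hta hκ.le
        have hexp : κ * (c / κ + 1) = c + κ := by field_simp
        linarith
      nlinarith
    have h2 : c ^ 2 < κ ^ 2 * (a + (-t)) ^ 2 := by
      have h : κ * (a + (-t)) ≤ -(c + κ) := by
        have := mul_le_mul_of_nonneg_left htb hκ.le
        have hexp : κ * -(c / κ + 1) = -(c + κ) := by field_simp
        linarith
      nlinarith
    have m1 := subset_convexHull ℝ _ (key t h1)
    have m2 := subset_convexHull ℝ _ (key (-t) h2)
    have := (convex_convexHull ℝ _) m1 m2 (by norm_num : (0:ℝ) ≤ 1/2)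
      (by norm_num : (0:ℝ) ≤ 1/2) (by norm_num)
    have heq : ((a, b) : ℝ × EuclideanSpace ℝ (Fin n)) =
        (1/2 : ℝ) • (a + t, b + t • m₀) + (1/2 : ℝ) • (a + (-t), b + (-t) • m₀) := by
      rw [Prod.smul_mk, Prod.smul_mk, Prod.mk_add_mk]
      refine Prod.ext ?_ ?_
      · simp; ring
      · simp only
        module
    rw [heq]
    exact this
end

section
/- Let λ and μ be linear forms on ℝ^{m-1} and ε > 0. Define Ω = {(a,b) ∈ ℝ × ℝ | ∀ (u,u') ∈ (ℝ^{m-1} × ℝ) \ {0}, (u'·b + μ(u))² < ε²((u')² + ‖u‖² + (a·u' + λ(u))²)}. If Ω is nonempty, then there exist κ > 0, η > 0 and m₀ ∈ ℝ such that Ω = {(a,b) | (b - m₀·a)² - κ²·a² < η²}. -/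
open scoped RealInnerProductSpace

private lemma cs3 (p q x z NU NY i : ℝ) (hNU : 0 ≤ NU) (hNY : 0 ≤ NY)
    (hI : i ^ 2 ≤ NU * NY) :
    (p * x + i + q * z) ^ 2 ≤ (p ^ 2 + NU + q ^ 2) * (x ^ 2 + NY + z ^ 2) := by
  rcases eq_or_lt_of_le hNY with h | h
  · have hi0 : i = 0 := by
      have h2 : i ^ 2 = 0 := le_antisymm (by nlinarith) (sq_nonneg i)
      exact pow_eq_zero_iff (by norm_num) |>.mp h2
    subst hi0
    nlinarith [sq_nonneg (p * z - q * x), mul_nonneg hNU (sq_nonneg x),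
      mul_nonneg hNU (sq_nonneg z), mul_nonneg hNU hNY]
  · nlinarith [mul_nonneg h.le (sq_nonneg (p * z - q * x)),
      sq_nonneg (NY * p - i * x), sq_nonneg (NY * q - i * z),
      mul_nonneg (sub_nonneg.2 hI) (add_nonneg (sq_nonneg x) (sq_nonneg z)),
      mul_nonneg h.le (sub_nonneg.2 hI)]

set_option maxHeartbeats 1000000 in
theorem stmt_3 (m : ℕ) (ε : ℝ) (hε : 0 < ε)
    (lam mu : EuclideanSpace ℝ (Fin (m - 1)) →ₗ[ℝ] ℝ)
    (Ω : Set (ℝ × ℝ))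
    (hΩ : Ω = {p : ℝ × ℝ | ∀ (u : EuclideanSpace ℝ (Fin (m - 1))) (u' : ℝ),
      ¬(u = 0 ∧ u' = 0) →
      (u' * p.2 + mu u) ^ 2 < ε ^ 2 * (u' ^ 2 + ‖u‖ ^ 2 + (p.1 * u' + lam u) ^ 2)})
    (hne : Ω.Nonempty) :
    ∃ κ > (0 : ℝ), ∃ η > (0 : ℝ), ∃ m₀ : ℝ,
      Ω = {p : ℝ × ℝ | (p.2 - m₀ * p.1) ^ 2 - κ ^ 2 * p.1 ^ 2 < η ^ 2} := by
  obtain ⟨l, hl⟩ : ∃ l : EuclideanSpace ℝ (Fin (m-1)), ∀ u, lam u = ⟪l, u⟫ := by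
    refine ⟨(InnerProductSpace.toDual ℝ _).symm (LinearMap.toContinuousLinearMap lam),
      fun u => ?_⟩
    rw [InnerProductSpace.toDual_symm_apply]; simp
  obtain ⟨w, hw⟩ : ∃ w : EuclideanSpace ℝ (Fin (m-1)), ∀ u, mu u = ⟪w, u⟫ := by
    refine ⟨(InnerProductSpace.toDual ℝ _).symm (LinearMap.toContinuousLinearMap mu),
      fun u => ?_⟩
    rw [InnerProductSpace.toDual_symm_apply]; simp
  -- Key characterization of Ω
  have key : ∀ a b : ℝ, (a, b) ∈ Ω ↔
      0 < (1 + a ^ 2 + ‖l‖ ^ 2) * (ε ^ 2 - b ^ 2 - ‖w‖ ^ 2) + (a * b + ⟪l, w⟫) ^ 2 := by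
    intro a b
    rw [hΩ]
    simp only [Set.mem_setOf_eq, hl, hw]
    have hh : (0:ℝ) < 1 + a ^ 2 + ‖l‖ ^ 2 := by positivity
    obtain ⟨c1, hc1h⟩ : ∃ c1 : ℝ, c1 * (1 + a ^ 2 + ‖l‖ ^ 2) = a * b + ⟪l, w⟫ :=
      ⟨(a * b + ⟪l, w⟫) / (1 + a ^ 2 + ‖l‖ ^ 2), by field_simp⟩
    have i1 : ⟪w, w - c1 • l⟫ = ‖w‖ ^ 2 - c1 * ⟪l, w⟫ := by
      rw [inner_sub_right, real_inner_smul_right, real_inner_self_eq_norm_sq,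
        real_inner_comm w l]
    have i2 : ⟪l, w - c1 • l⟫ = ⟪l, w⟫ - c1 * ‖l‖ ^ 2 := by
      rw [inner_sub_right, real_inner_smul_right, real_inner_self_eq_norm_sq]
    have i3 : ‖w - c1 • l‖ ^ 2 = ‖w‖ ^ 2 - 2 * (c1 * ⟪l, w⟫) + c1 ^ 2 * ‖l‖ ^ 2 := by
      rw [norm_sub_sq_real, real_inner_smul_right, norm_smul, real_inner_comm w l]
      simp [mul_pow, sq_abs]
    constructor
    · intro H
      by_cases hz : w - c1 • l = 0 ∧ b - c1 * a = 0
      · obtain ⟨h1, h2⟩ := hz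
        have hwl : w = c1 • l := by rwa [sub_eq_zero] at h1
        have hba : b = c1 * a := by linarith [sub_eq_zero.mp h2]
        have hcl : ⟪l, w⟫ = c1 * ‖l‖ ^ 2 := by
          rw [hwl, real_inner_smul_right, real_inner_self_eq_norm_sq]
        have hc10 : c1 = 0 := by
          have h3 := hc1h
          rw [hba, hcl] at h3
          linear_combination h3
        have hw0 : w = 0 := by rw [hwl, hc10, zero_smul]
        have hb0 : b = 0 := by rw [hba, hc10, zero_mul]
        rw [hw0, hb0]
        simp only [norm_zero, inner_zero_right]
        nlinarith [mul_pos hh (pow_pos hε 2)]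
      · have H1 := H (w - c1 • l) (b - c1 * a) hz
        rw [i1, i2, i3] at H1
        have e1 : (b - c1 * a) * b + (‖w‖ ^ 2 - c1 * ⟪l, w⟫)
            = b ^ 2 + ‖w‖ ^ 2 - c1 * (a * b + ⟪l, w⟫) := by ring
        have e2 : (b - c1 * a) ^ 2 + (‖w‖ ^ 2 - 2 * (c1 * ⟪l, w⟫) + c1 ^ 2 * ‖l‖ ^ 2)
            + (a * (b - c1 * a) + (⟪l, w⟫ - c1 * ‖l‖ ^ 2)) ^ 2
            = b ^ 2 + ‖w‖ ^ 2 - c1 * (a * b + ⟪l, w⟫) := by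
          linear_combination (c1 * (a ^ 2 + ‖l‖ ^ 2) - (a * b + ⟪l, w⟫)) * hc1h
        rw [e1, e2] at H1
        set g : ℝ := b ^ 2 + ‖w‖ ^ 2 - c1 * (a * b + ⟪l, w⟫) with hgdef
        have hg : 0 < g := by nlinarith [H1, sq_nonneg g, pow_pos hε 2]
        have hge : g < ε ^ 2 := by nlinarith [H1, hg]
        have hexp : (1 + a ^ 2 + ‖l‖ ^ 2) * (ε ^ 2 - b ^ 2 - ‖w‖ ^ 2) + (a * b + ⟪l, w⟫) ^ 2
            = (1 + a ^ 2 + ‖l‖ ^ 2) * (ε ^ 2 - g) := by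
          rw [hgdef]
          linear_combination (-(a * b + ⟪l, w⟫)) * hc1h
        rw [hexp]
        exact mul_pos hh (by linarith)
    · intro hF u u' hu
      have hiCS : ⟪w - c1 • l, u⟫ ^ 2 ≤ ‖u‖ ^ 2 * ‖w - c1 • l‖ ^ 2 := by
        have h1 := abs_real_inner_le_norm (w - c1 • l) u
        nlinarith [abs_nonneg (⟪w - c1 • l, u⟫), sq_abs (⟪w - c1 • l, u⟫),
          norm_nonneg u, norm_nonneg (w - c1 • l)]
      have hcs := cs3 u' (a * u' + ⟪l, u⟫) (b - c1 * a) c1 (‖u‖ ^ 2) (‖w - c1 • l‖ ^ 2)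
        (⟪w - c1 • l, u⟫) (sq_nonneg _) (sq_nonneg _) hiCS
      have tid : u' * (b - c1 * a) + ⟪w - c1 • l, u⟫ + (a * u' + ⟪l, u⟫) * c1
          = u' * b + ⟪w, u⟫ := by
        rw [inner_sub_left, real_inner_smul_left]; ring
      rw [tid] at hcs
      have hpsi : (b - c1 * a) ^ 2 + ‖w - c1 • l‖ ^ 2 + c1 ^ 2 < ε ^ 2 := by
        have hid : (1 + a ^ 2 + ‖l‖ ^ 2)
            * (ε ^ 2 - ((b - c1 * a) ^ 2 + ‖w - c1 • l‖ ^ 2 + c1 ^ 2))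
            = (1 + a ^ 2 + ‖l‖ ^ 2) * (ε ^ 2 - b ^ 2 - ‖w‖ ^ 2) + (a * b + ⟪l, w⟫) ^ 2 := by
          rw [i3]
          linear_combination ((a * b + ⟪l, w⟫) - c1 * (1 + a ^ 2 + ‖l‖ ^ 2)) * hc1h
        have h1 : 0 < (1 + a ^ 2 + ‖l‖ ^ 2)
            * (ε ^ 2 - ((b - c1 * a) ^ 2 + ‖w - c1 • l‖ ^ 2 + c1 ^ 2)) := by
          rw [hid]; exact hF
        by_contra hcon
        push_neg at hcon
        have h2 : ε ^ 2 - ((b - c1 * a) ^ 2 + ‖w - c1 • l‖ ^ 2 + c1 ^ 2) ≤ 0 := by linarith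
        have := mul_nonpos_of_nonneg_of_nonpos hh.le h2
        linarith
      have hS : 0 < u' ^ 2 + ‖u‖ ^ 2 := by
        rcases eq_or_ne u 0 with h0 | h0
        · have hu' : u' ≠ 0 := fun h' => hu ⟨h0, h'⟩
          have : 0 < u' ^ 2 := by positivity
          nlinarith [sq_nonneg ‖u‖]
        · have : 0 < ‖u‖ := norm_pos_iff.mpr h0
          nlinarith [sq_nonneg u']
      have hS' : 0 < u' ^ 2 + ‖u‖ ^ 2 + (a * u' + ⟪l, u⟫) ^ 2 := by
        nlinarith [sq_nonneg (a * u' + ⟪l, u⟫)]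
      have hmul := mul_lt_mul_of_pos_left hpsi hS'
      nlinarith [hcs, hmul]
  -- Now the global structure
  have hD : (0:ℝ) < 1 + ‖l‖ ^ 2 := by positivity
  have hD2 : (0:ℝ) < (1 + ‖l‖ ^ 2) ^ 2 := by positivity
  obtain ⟨⟨a0, b0⟩, h0⟩ := hne
  have hF0 := (key a0 b0).1 h0
  have hG : 0 < (1 + ‖l‖ ^ 2) * (ε ^ 2 - ‖w‖ ^ 2) + ⟪l, w⟫ ^ 2 := by
    by_contra hGc
    push_neg at hGc
    have h1 : ((1 + ‖l‖ ^ 2) * (ε ^ 2 - ‖w‖ ^ 2) + ⟪l, w⟫ ^ 2) * (1 + ‖l‖ ^ 2) ≤ 0 :=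
      mul_nonpos_of_nonpos_of_nonneg hGc hD.le
    have h2 : ((1 + ‖l‖ ^ 2) * (ε ^ 2 - ‖w‖ ^ 2) + ⟪l, w⟫ ^ 2) * a0 ^ 2 ≤ 0 :=
      mul_nonpos_of_nonpos_of_nonneg hGc (sq_nonneg _)
    nlinarith [mul_pos hD hF0, sq_nonneg ((1 + ‖l‖ ^ 2) * b0 - ⟪l, w⟫ * a0), h1, h2]
  set G : ℝ := (1 + ‖l‖ ^ 2) * (ε ^ 2 - ‖w‖ ^ 2) + ⟪l, w⟫ ^ 2 with hGdef
  have hDne : (1 + ‖l‖ ^ 2) ≠ 0 := hD.ne'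
  refine ⟨Real.sqrt G / (1 + ‖l‖ ^ 2), div_pos (Real.sqrt_pos.2 hG) hD,
    Real.sqrt (G / (1 + ‖l‖ ^ 2)), Real.sqrt_pos.2 (div_pos hG hD),
    ⟪l, w⟫ / (1 + ‖l‖ ^ 2), ?_⟩
  ext ⟨a, b⟩
  rw [key a b]
  simp only [Set.mem_setOf_eq]
  have hκ2 : (Real.sqrt G / (1 + ‖l‖ ^ 2)) ^ 2 = G / (1 + ‖l‖ ^ 2) ^ 2 := by
    rw [div_pow, Real.sq_sqrt hG.le]
  have hη2 : (Real.sqrt (G / (1 + ‖l‖ ^ 2))) ^ 2 = G / (1 + ‖l‖ ^ 2) :=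
    Real.sq_sqrt (div_pos hG hD).le
  rw [hκ2, hη2]
  have hDF : (1 + ‖l‖ ^ 2) *
      ((1 + a ^ 2 + ‖l‖ ^ 2) * (ε ^ 2 - b ^ 2 - ‖w‖ ^ 2) + (a * b + ⟪l, w⟫) ^ 2)
      = G * ((1 + ‖l‖ ^ 2) + a ^ 2) - ((1 + ‖l‖ ^ 2) * b - ⟪l, w⟫ * a) ^ 2 := by
    rw [hGdef]; ring
  have e : (b - ⟪l, w⟫ / (1 + ‖l‖ ^ 2) * a) ^ 2 - G / (1 + ‖l‖ ^ 2) ^ 2 * a ^ 2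
      - G / (1 + ‖l‖ ^ 2)
      = (((1 + ‖l‖ ^ 2) * b - ⟪l, w⟫ * a) ^ 2 - G * ((1 + ‖l‖ ^ 2) + a ^ 2))
        / (1 + ‖l‖ ^ 2) ^ 2 := by
    field_simp
    ring
  constructor
  · intro h
    have h1 : 0 < (1 + ‖l‖ ^ 2) *
        ((1 + a ^ 2 + ‖l‖ ^ 2) * (ε ^ 2 - b ^ 2 - ‖w‖ ^ 2) + (a * b + ⟪l, w⟫) ^ 2) :=
      mul_pos hD h
    have h2 : ((1 + ‖l‖ ^ 2) * b - ⟪l, w⟫ * a) ^ 2 - G * ((1 + ‖l‖ ^ 2) + a ^ 2) < 0 := by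
      linarith
    have h3 := div_neg_of_neg_of_pos h2 hD2
    linarith [e]
  · intro h
    have h3 : (((1 + ‖l‖ ^ 2) * b - ⟪l, w⟫ * a) ^ 2 - G * ((1 + ‖l‖ ^ 2) + a ^ 2))
        / (1 + ‖l‖ ^ 2) ^ 2 < 0 := by linarith [e]
    have h2 : ((1 + ‖l‖ ^ 2) * b - ⟪l, w⟫ * a) ^ 2 - G * ((1 + ‖l‖ ^ 2) + a ^ 2) < 0 := by
      by_contra hcon
      push_neg at hcon
      have := div_nonneg hcon hD2.le
      linarith
    by_contra hcon
    push_neg at hcon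
    have := mul_nonpos_of_nonneg_of_nonpos hD.le hcon
    linarith
end

section
/- Let λ be a linear form on ℝ^{m-1}, ψ : ℝ^{m-1} → ℝⁿ linear, ε > 0, and Ω = {(a,b) ∈ ℝ × ℝⁿ | ∀ (u,u') ≠ 0, ‖u'·b + ψ(u)‖² < ε²((u')² + ‖u‖² + (a·u' + λ(u))²)}. Then Ω is star-shaped with respect to the origin whenever it is nonempty; in particular Ω is either empty or connected. -/
theorem stmt_4 (m n : ℕ) (ε : ℝ) (hε : 0 < ε)
    (lam : EuclideanSpace ℝ (Fin (m - 1)) →ₗ[ℝ] ℝ)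
    (ψ : EuclideanSpace ℝ (Fin (m - 1)) →ₗ[ℝ] (Fin n → ℝ))
    (Ω : Set (ℝ × (Fin n → ℝ)))
    (hΩ : Ω = {p : ℝ × (Fin n → ℝ) |
      ∀ (u : EuclideanSpace ℝ (Fin (m - 1))) (u' : ℝ), ¬(u = 0 ∧ u' = 0) →
      ‖u' • p.2 + ψ u‖ ^ 2 <
        ε ^ 2 * (u' ^ 2 + ‖u‖ ^ 2 + (p.1 * u' + lam u) ^ 2)}) :
    (Ω.Nonempty →
      (0, 0) ∈ Ω ∧ ∀ p ∈ Ω, ∀ t : ℝ, t ∈ Set.Ioc (0 : ℝ) 1 →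
        (t * p.1, t • p.2) ∈ Ω) ∧
    (Ω = ∅ ∨ IsConnected Ω) := by
  subst hΩ
  -- main claims
  have hzero : ∀ p ∈ {p : ℝ × (Fin n → ℝ) |
      ∀ (u : EuclideanSpace ℝ (Fin (m - 1))) (u' : ℝ), ¬(u = 0 ∧ u' = 0) →
      ‖u' • p.2 + ψ u‖ ^ 2 <
        ε ^ 2 * (u' ^ 2 + ‖u‖ ^ 2 + (p.1 * u' + lam u) ^ 2)},
      ((0 : ℝ), (0 : Fin n → ℝ)) ∈ {p : ℝ × (Fin n → ℝ) |
      ∀ (u : EuclideanSpace ℝ (Fin (m - 1))) (u' : ℝ), ¬(u = 0 ∧ u' = 0) →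
      ‖u' • p.2 + ψ u‖ ^ 2 <
        ε ^ 2 * (u' ^ 2 + ‖u‖ ^ 2 + (p.1 * u' + lam u) ^ 2)} := by
    intro p hp
    intro u u' hne
    simp only [smul_zero, zero_add, zero_mul]
    by_cases hu : u = 0
    · subst hu
      have hu' : u' ≠ 0 := fun h => hne ⟨rfl, h⟩
      simp only [map_zero, add_zero, norm_zero]
      have : (0:ℝ) < u' ^ 2 := by positivity
      nlinarith [mul_pos (pow_pos hε 2) this]
    · have h := hp u 0 (fun h => hu h.1)
      simp only [zero_smul, zero_add, mul_zero] at h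
      nlinarith [sq_nonneg u', sq_nonneg ε]
  have hstar : ∀ p ∈ {p : ℝ × (Fin n → ℝ) |
      ∀ (u : EuclideanSpace ℝ (Fin (m - 1))) (u' : ℝ), ¬(u = 0 ∧ u' = 0) →
      ‖u' • p.2 + ψ u‖ ^ 2 <
        ε ^ 2 * (u' ^ 2 + ‖u‖ ^ 2 + (p.1 * u' + lam u) ^ 2)},
      ∀ t : ℝ, t ∈ Set.Ioc (0 : ℝ) 1 →
      ((t * p.1, t • p.2) : ℝ × (Fin n → ℝ)) ∈ {p : ℝ × (Fin n → ℝ) |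
      ∀ (u : EuclideanSpace ℝ (Fin (m - 1))) (u' : ℝ), ¬(u = 0 ∧ u' = 0) →
      ‖u' • p.2 + ψ u‖ ^ 2 <
        ε ^ 2 * (u' ^ 2 + ‖u‖ ^ 2 + (p.1 * u' + lam u) ^ 2)} := by
    intro p hp t ht u u' hne
    obtain ⟨ht0, ht1⟩ := ht
    have hne' : ¬(u = 0 ∧ t * u' = 0) := by
      rintro ⟨hu, htu⟩
      exact hne ⟨hu, by
        rcases mul_eq_zero.1 htu with h | h
        · exact absurd h (ne_of_gt ht0)
        · exact h⟩
    have h := hp u (t * u') hne'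
    have heq : u' • (t • p.2) = (t * u') • p.2 := by
      rw [smul_smul, mul_comm]
    simp only [heq]
    have ht2 : t ^ 2 ≤ 1 := by nlinarith
    have hsq : (t * u') ^ 2 ≤ u' ^ 2 := by nlinarith [sq_nonneg u', sq_nonneg (t*u')]
    have harg : p.1 * (t * u') + lam u = t * p.1 * u' + lam u := by ring_nf
    rw [harg] at h
    nlinarith [sq_nonneg ε]
  constructor
  · intro ⟨p, hp⟩
    exact ⟨hzero p hp, fun q hq t ht => hstar q hq t ht⟩
  · set S := {p : ℝ × (Fin n → ℝ) |
      ∀ (u : EuclideanSpace ℝ (Fin (m - 1))) (u' : ℝ), ¬(u = 0 ∧ u' = 0) →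
      ‖u' • p.2 + ψ u‖ ^ 2 <
        ε ^ 2 * (u' ^ 2 + ‖u‖ ^ 2 + (p.1 * u' + lam u) ^ 2)} with hS
    rcases S.eq_empty_or_nonempty with h | ⟨p, hp⟩
    · exact Or.inl h
    · right
      have h0 : ((0,0) : ℝ × (Fin n → ℝ)) ∈ S := hzero p hp
      have hsc : StarConvex ℝ ((0,0) : ℝ × (Fin n → ℝ)) S := by
        intro q hq a b ha hb hab
        by_cases hb0 : b = 0
        · subst hb0
          have ha1 : a = 1 := by linarith
          simpa [ha1] using h0
        · have hb' : 0 < b := lt_of_le_of_ne hb (Ne.symm hb0)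
          have hb1 : b ≤ 1 := by linarith
          have := hstar q hq b ⟨hb', hb1⟩
          have hq2 : a • ((0,0) : ℝ × (Fin n → ℝ)) + b • q = (b * q.1, b • q.2) := by
            simp [Prod.ext_iff, Prod.smul_def, smul_eq_mul]
          rw [hq2]
          exact this
      have hpc : IsPathConnected S :=
        ⟨(0,0), h0, fun {y} hy => JoinedIn.of_segment_subset (hsc.segment_subset hy)⟩
      exact ⟨⟨(0,0), h0⟩, hpc.isConnected.isPreconnected⟩
end

section
/- Let λ : ℝ^{m-1} → ℝ and ψ : ℝ^{m-1} → ℝⁿ be linear and ε > 0, with ℝⁿ carrying the sup norm. Then the set Ω_{λ,ψ,ε} = {(a,b) ∈ ℝ × ℝⁿ | ∀(u,u') ≠ 0, ‖u'b + ψ(u)‖² < ε²((u')² + ‖u‖² + (au' + λ(u))²)} is ample: the convex hull of each of its connected components is all of ℝ × ℝⁿ. -/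
private lemma margin_aux (k n : ℕ) (ε : ℝ) (hε : 0 < ε)
    (lam : EuclideanSpace ℝ (Fin k) →ₗ[ℝ] ℝ)
    (ψ : EuclideanSpace ℝ (Fin k) →ₗ[ℝ] (Fin n → ℝ))
    (B : ℝ) (hB : 0 ≤ B) (hlam : ∀ u, (lam u)^2 ≤ B * ‖u‖^2)
    (hstrict : ∀ u : EuclideanSpace ℝ (Fin k), u ≠ 0 →
      ‖ψ u‖^2 < ε^2 * (‖u‖^2 + (lam u)^2)) :
    ∃ δ : ℝ, 0 < δ ∧ δ ≤ ε^2 ∧ ∀ u, ‖ψ u‖^2 ≤ (ε^2 - δ) * (‖u‖^2 + (lam u)^2) := by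
  by_cases hk : ∀ u : EuclideanSpace ℝ (Fin k), u = 0
  · exact ⟨ε^2, by positivity, le_refl _, fun u => by simp [hk u]⟩
  · push_neg at hk
    obtain ⟨u₀, hu₀⟩ := hk
    have h1 : Continuous fun u : EuclideanSpace ℝ (Fin k) => lam u :=
      lam.continuous_of_finiteDimensional
    have h2 : Continuous fun u : EuclideanSpace ℝ (Fin k) => ψ u :=
      ψ.continuous_of_finiteDimensional
    have hgc : Continuous (fun u : EuclideanSpace ℝ (Fin k) =>
        ε^2*(‖u‖^2 + (lam u)^2) - ‖ψ u‖^2) :=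
      (continuous_const.mul ((continuous_norm.pow 2).add (h1.pow 2))).sub (h2.norm.pow 2)
    have hsne : (Metric.sphere (0:EuclideanSpace ℝ (Fin k)) 1).Nonempty :=
      ⟨‖u₀‖⁻¹ • u₀, by
        rw [mem_sphere_zero_iff_norm]
        exact norm_smul_inv_norm hu₀⟩
    obtain ⟨x₀, hx₀s, hx₀min⟩ :=
      (isCompact_sphere (0:EuclideanSpace ℝ (Fin k)) 1).exists_isMinOn hsne hgc.continuousOn
    have hx₀n : ‖x₀‖ = 1 := mem_sphere_zero_iff_norm.1 hx₀s
    have hx₀ne : x₀ ≠ 0 := by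
      intro h; rw [h] at hx₀n; simp at hx₀n
    set μ : ℝ := ε^2*(‖x₀‖^2 + (lam x₀)^2) - ‖ψ x₀‖^2 with hμ
    have hμpos : 0 < μ := by
      have h3 := hstrict x₀ hx₀ne
      rw [hμ]; linarith
    set δ : ℝ := μ / (1 + B) with hδ
    have h1B : (0:ℝ) < 1 + B := by linarith
    have hδpos : 0 < δ := div_pos hμpos h1B
    have hδB : δ * (1 + B) = μ := by rw [hδ]; field_simp
    have hδε : δ ≤ ε^2 := by
      have hb0 : (lam x₀)^2 ≤ B := by
        have := hlam x₀; rw [hx₀n] at this; linarith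
      have h0 : 0 ≤ ‖ψ x₀‖^2 := sq_nonneg _
      have hgle : μ ≤ ε^2 * (1 + B) := by
        rw [hμ, hx₀n]; nlinarith
      rw [hδ, div_le_iff₀ h1B]
      linarith
    refine ⟨δ, hδpos, hδε, fun u => ?_⟩
    have keyunit : ∀ x : EuclideanSpace ℝ (Fin k), ‖x‖ = 1 →
        ‖ψ x‖^2 ≤ (ε^2 - δ) * (1 + (lam x)^2) := by
      intro x hx1
      have hmin : μ ≤ ε^2*(‖x‖^2 + (lam x)^2) - ‖ψ x‖^2 :=
        hx₀min (by rwa [mem_sphere_zero_iff_norm])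
      have hBx : (lam x)^2 ≤ B := by
        have := hlam x; rw [hx1] at this; linarith
      have h4 : δ * (1 + (lam x)^2) ≤ μ := by
        rw [← hδB]
        nlinarith
      rw [hx1] at hmin
      nlinarith
    rcases eq_or_ne u 0 with h | h
    · simp [h]
    · have hcu : 0 < ‖u‖ := norm_pos_iff.2 h
      obtain ⟨x, hx1, c, hcpos, hc⟩ :
          ∃ x, ‖x‖ = 1 ∧ ∃ c : ℝ, 0 < c ∧ u = c • x :=
        ⟨‖u‖⁻¹ • u, norm_smul_inv_norm h, ‖u‖, hcu, (smul_inv_smul₀ hcu.ne' u).symm⟩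
      rw [hc, map_smul, map_smul]
      simp only [norm_smul, Real.norm_eq_abs, abs_of_pos hcpos, smul_eq_mul, mul_pow, hx1]
      nlinarith [mul_le_mul_of_nonneg_left (keyunit x hx1) (sq_nonneg c)]

set_option maxHeartbeats 2000000 in
theorem stmt_11 (m n : ℕ) (ε : ℝ) (hε : 0 < ε)
    (lam : EuclideanSpace ℝ (Fin (m - 1)) →ₗ[ℝ] ℝ)
    (ψ : EuclideanSpace ℝ (Fin (m - 1)) →ₗ[ℝ] (Fin n → ℝ))
    (Ω : Set (ℝ × (Fin n → ℝ)))
    (hΩ : Ω = {p : ℝ × (Fin n → ℝ) |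
      ∀ (u : EuclideanSpace ℝ (Fin (m - 1))) (u' : ℝ), ¬(u = 0 ∧ u' = 0) →
      ‖u' • p.2 + ψ u‖ ^ 2 <
        ε ^ 2 * (u' ^ 2 + ‖u‖ ^ 2 + (p.1 * u' + lam u) ^ 2)}) :
    ∀ p ∈ Ω, convexHull ℝ (connectedComponentIn Ω p) = Set.univ := by
  intro p hp
  have hmem : ∀ q : ℝ × (Fin n → ℝ), q ∈ Ω ↔
      (∀ (u : EuclideanSpace ℝ (Fin (m - 1))) (u' : ℝ), ¬(u = 0 ∧ u' = 0) →
      ‖u' • q.2 + ψ u‖ ^ 2 <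
        ε ^ 2 * (u' ^ 2 + ‖u‖ ^ 2 + (q.1 * u' + lam u) ^ 2)) := by
    intro q; rw [hΩ]; exact Iff.rfl
  clear hΩ
  -- the homogeneous strict inequality
  have H1 : ∀ u : EuclideanSpace ℝ (Fin (m - 1)), u ≠ 0 →
      ‖ψ u‖^2 < ε^2 * (‖u‖^2 + (lam u)^2) := by
    intro u hu
    have := (hmem p).mp hp u 0 (by simp [hu])
    simpa using this
  -- Riesz representation
  obtain ⟨y, hy⟩ : ∃ y : EuclideanSpace ℝ (Fin (m-1)), ∀ x, lam x = @inner ℝ _ _ y x := by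
    have h : Continuous lam := lam.continuous_of_finiteDimensional
    set f : EuclideanSpace ℝ (Fin (m-1)) →L[ℝ] ℝ := ⟨lam, h⟩ with hf
    refine ⟨(InnerProductSpace.toDual ℝ (EuclideanSpace ℝ (Fin (m-1)))).symm f, fun x => ?_⟩
    have := @InnerProductSpace.toDual_symm_apply ℝ (EuclideanSpace ℝ (Fin (m-1))) _ _ _ _ x f
    rw [this]
    rfl
  have hCS : ∀ u, (lam u)^2 ≤ ‖y‖^2 * ‖u‖^2 := by
    intro u
    rw [hy]
    have h := abs_real_inner_le_norm y u
    have h2 : (0:ℝ) ≤ |@inner ℝ _ _ y u| := abs_nonneg _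
    nlinarith [sq_abs (@inner ℝ _ _ y u)]
  obtain ⟨δ, hδpos, hδε, hmargin⟩ := margin_aux (m-1) n ε hε lam ψ (‖y‖^2) (sq_nonneg _) hCS H1
  set L : ℝ := ‖y‖ with hL
  set T : ℝ := 1 + L^2 with hT
  have hTpos : (0:ℝ) < T := by positivity
  have hT1 : (1:ℝ) ≤ T := by nlinarith [sq_nonneg L]
  have hlamy : lam y = L^2 := by
    rw [hy, hL, real_inner_self_eq_norm_sq]
  -- central lemma: explicit points in Ω
  have keyA : ∀ (a : ℝ) (e : Fin n → ℝ),
      ‖e‖^2 * (δ + ε^2*T) * T < δ * ε^2 * (T + a^2) →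
      ((a, (a/T) • ψ y + e) : ℝ × (Fin n → ℝ)) ∈ Ω := by
    intro a e he
    rw [hmem]
    have hT0 : (0:ℝ) < 1 + L^2 := by positivity
    have core : ∀ v : EuclideanSpace ℝ (Fin (m-1)),
        ‖((a/T) • ψ y + e) + ψ v‖^2 < ε^2 * (1 + ‖v‖^2 + (a + lam v)^2) := by
      intro v
      set w : EuclideanSpace ℝ (Fin (m-1)) := v + (a/T) • y with hw
      set s : ℝ := lam w with hs
      have hv : v = w - (a/T) • y := by rw [hw]; abel
      have hw1 : ‖ψ w‖^2 ≤ (ε^2 - δ) * (‖w‖^2 + s^2) := hmargin w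
      have hw2 : s^2 ≤ L^2 * ‖w‖^2 := hCS w
      have hsy : @inner ℝ _ _ w y = s := by rw [hs, hy, real_inner_comm]
      have hnv : ‖v‖^2 = ‖w‖^2 - 2*((a/T)*s) + (a/T)^2*L^2 := by
        rw [hv, norm_sub_sq_real, real_inner_smul_right, hsy, norm_smul,
          Real.norm_eq_abs, mul_pow, sq_abs, hL]
      have hlv : lam v = s - (a/T)*L^2 := by
        rw [hv, map_sub, map_smul, smul_eq_mul, hlamy, hs]
      have hbv : ((a/T) • ψ y + e) + ψ v = e + ψ w := by
        rw [hv, map_sub, map_smul]; abel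
      have hQ : (1+L^2) * (1 + ‖v‖^2 + (a + lam v)^2)
          = (1+L^2) + (1+L^2)*‖w‖^2 + (1+L^2)*s^2 + a^2 := by
        rw [hnv, hlv, hT]
        field_simp
        ring
      have htri : ‖e + ψ w‖ ≤ ‖e‖ + ‖ψ w‖ := norm_add_le _ _
      have hsq : ‖e + ψ w‖^2 ≤ (‖e‖ + ‖ψ w‖)^2 := by
        nlinarith [norm_nonneg (e + ψ w), norm_nonneg e, norm_nonneg (ψ w)]
      have hA2 : ‖ψ w‖^2 ≤ ε^2*(1+L^2)*‖w‖^2 := by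
        nlinarith [mul_le_mul_of_nonneg_left hw2 (sub_nonneg.2 hδε), sq_nonneg ‖w‖,
          hδpos, sq_nonneg s]
      have he' : ‖e‖^2 * (δ + ε^2*(1+L^2)) * (1+L^2) < δ * ε^2 * ((1+L^2) + a^2) := by
        rw [hT] at he; exact he
      have B1 : (ε^2*(1+L^2) + δ) * ‖ψ w‖^2 ≤ ε^2*(ε^2*(1+L^2))*(‖w‖^2 + s^2) := by
        nlinarith [mul_le_mul_of_nonneg_left hw1 (le_of_lt (show (0:ℝ) < ε^2*(1+L^2) by positivity)),
          mul_le_mul_of_nonneg_left hA2 hδpos.le, sq_nonneg s,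
          mul_nonneg (mul_nonneg hδpos.le (sq_nonneg ε)) (mul_nonneg hT0.le (sq_nonneg s))]
      have B3 : 2*(δ*(ε^2*(1+L^2)))*(‖ψ w‖*‖e‖) ≤ δ^2*‖ψ w‖^2 + (ε^2*(1+L^2))^2*‖e‖^2 := by
        nlinarith [sq_nonneg (δ*‖ψ w‖ - (ε^2*(1+L^2))*‖e‖)]
      have final : δ*ε^2*((1+L^2)*(‖e‖+‖ψ w‖)^2)
          < δ*ε^2*(ε^2*((1+L^2) + (1+L^2)*‖w‖^2 + (1+L^2)*s^2 + a^2)) := by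
        nlinarith [mul_le_mul_of_nonneg_left B1 hδpos.le, B3,
          mul_lt_mul_of_pos_left he' (show (0:ℝ) < ε^2 by positivity)]
      have hfin2 : (1+L^2)*(‖e‖+‖ψ w‖)^2
          < ε^2*((1+L^2) + (1+L^2)*‖w‖^2 + (1+L^2)*s^2 + a^2) := by
        exact (mul_lt_mul_iff_right₀ (show (0:ℝ) < δ*ε^2 by positivity)).mp final
      have h9 : (1+L^2) * (ε^2*(1 + ‖v‖^2 + (a+lam v)^2))
          = ε^2*((1+L^2) + (1+L^2)*‖w‖^2 + (1+L^2)*s^2 + a^2) := by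
        linear_combination ε^2 * hQ
      rw [hbv]
      have h10 : (1+L^2)*(‖e + ψ w‖^2) < (1+L^2) * (ε^2*(1 + ‖v‖^2 + (a+lam v)^2)) := by
        rw [h9]
        nlinarith [hfin2, hsq, hT0]
      exact lt_of_mul_lt_mul_left (by linarith [h10]) hT0.le
    -- now verify the defining property of Ω
    intro u u' hne
    rcases eq_or_ne u' 0 with h0 | h0
    · subst h0
      have hu : u ≠ 0 := fun h => hne ⟨h, rfl⟩
      simpa using H1 u hu
    · have hu2 : (0:ℝ) < u'^2 := by positivity
      obtain ⟨v, hv⟩ : ∃ v : EuclideanSpace ℝ (Fin (m-1)), u = u' • v :=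
        ⟨u'⁻¹ • u, (smul_inv_smul₀ h0 u).symm⟩
      have main := core v
      simp only
      rw [hv, map_smul, ← smul_add, norm_smul, norm_smul, Real.norm_eq_abs, map_smul,
        smul_eq_mul]
      calc (|u'| * ‖(a/T) • ψ y + e + ψ v‖)^2
          = u'^2 * ‖(a/T) • ψ y + e + ψ v‖^2 := by rw [mul_pow, sq_abs]
        _ < u'^2 * (ε^2 * (1 + ‖v‖^2 + (a + lam v)^2)) := by
            exact (mul_lt_mul_iff_right₀ hu2).mpr main
        _ = ε ^ 2 * (u' ^ 2 + (|u'| * ‖v‖) ^ 2 + (a * u' + u' * lam v) ^ 2) := by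
            rw [mul_pow, sq_abs]; ring
  -- convexity of slices
  have hconv : ∀ (a : ℝ) (b1 b2 : Fin n → ℝ), (a, b1) ∈ Ω → (a, b2) ∈ Ω →
      ∀ θ1 θ2 : ℝ, 0 ≤ θ1 → 0 ≤ θ2 → θ1 + θ2 = 1 → (a, θ1 • b1 + θ2 • b2) ∈ Ω := by
    intro a b1 b2 h1 h2 θ1 θ2 hθ1 hθ2 hsum
    rw [hmem] at h1 h2 ⊢
    intro u u' hne
    have g1 := h1 u u' hne
    have g2 := h2 u u' hne
    simp only at g1 g2 ⊢
    obtain rfl : θ2 = 1 - θ1 := by linarith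
    have heq : u' • (θ1 • b1 + (1-θ1) • b2) + ψ u
        = θ1 • (u' • b1 + ψ u) + (1-θ1) • (u' • b2 + ψ u) := by
      module
    rw [heq]
    have t1 : ‖θ1 • (u' • b1 + ψ u) + (1-θ1) • (u' • b2 + ψ u)‖
        ≤ θ1 * ‖u' • b1 + ψ u‖ + (1-θ1) * ‖u' • b2 + ψ u‖ := by
      calc ‖θ1 • (u' • b1 + ψ u) + (1-θ1) • (u' • b2 + ψ u)‖
          ≤ ‖θ1 • (u' • b1 + ψ u)‖ + ‖(1-θ1) • (u' • b2 + ψ u)‖ := norm_add_le _ _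
        _ = θ1 * ‖u' • b1 + ψ u‖ + (1-θ1) * ‖u' • b2 + ψ u‖ := by
            rw [norm_smul, norm_smul, Real.norm_eq_abs, Real.norm_eq_abs,
              abs_of_nonneg hθ1, abs_of_nonneg (by linarith : (0:ℝ) ≤ 1 - θ1)]
    have hn1 : 0 ≤ ‖u' • b1 + ψ u‖ := norm_nonneg _
    have hn2 : 0 ≤ ‖u' • b2 + ψ u‖ := norm_nonneg _
    have hnn : 0 ≤ ‖θ1 • (u' • b1 + ψ u) + (1-θ1) • (u' • b2 + ψ u)‖ := norm_nonneg _
    have t2 : ‖θ1 • (u' • b1 + ψ u) + (1-θ1) • (u' • b2 + ψ u)‖^2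
        ≤ (θ1 * ‖u' • b1 + ψ u‖ + (1-θ1) * ‖u' • b2 + ψ u‖)^2 := by
      nlinarith [mul_self_le_mul_self hnn t1]
    have jensen : ‖θ1 • (u' • b1 + ψ u) + (1-θ1) • (u' • b2 + ψ u)‖^2
        ≤ θ1 * ‖u' • b1 + ψ u‖^2 + (1-θ1) * ‖u' • b2 + ψ u‖^2 := by
      nlinarith [t2,
        mul_nonneg (mul_nonneg hθ1 hθ2) (sq_nonneg (‖u' • b1 + ψ u‖ - ‖u' • b2 + ψ u‖))]
    rcases le_total (‖u' • b1 + ψ u‖^2) (‖u' • b2 + ψ u‖^2) with hcmp | hcmp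
    · nlinarith [jensen, g2, mul_nonneg hθ1 (sub_nonneg.2 hcmp)]
    · nlinarith [jensen, g1, mul_nonneg hθ2 (sub_nonneg.2 hcmp)]
  -- the central curve
  set c : ℝ → ℝ × (Fin n → ℝ) := fun a => (a, (a/T) • ψ y) with hc
  have hcc : Continuous c :=
    continuous_id.prodMk ((continuous_id.div_const T).smul continuous_const)
  have hcΩ : ∀ a, c a ∈ Ω := by
    intro a
    have h0 : ‖(0:Fin n → ℝ)‖^2 * (δ + ε^2*T) * T < δ * ε^2 * (T + a^2) := by
      simp only [norm_zero]
      have : (0:ℝ) < δ * ε^2 * (T + a^2) := by positivity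
      nlinarith
    have := keyA a 0 h0
    simpa using this
  -- Ω is preconnected
  have hpre : IsPreconnected Ω := by
    have hK : IsPreconnected (Set.range c) := isPreconnected_range hcc
    have hseg : ∀ q ∈ Ω, segment ℝ q (c q.1) ⊆ Ω := by
      intro q hq x hx
      obtain ⟨θ1, θ2, hθ1, hθ2, hsum, rfl⟩ := hx
      have hx2 : θ1 • q + θ2 • c q.1 = (q.1, θ1 • q.2 + θ2 • ((q.1/T) • ψ y)) := by
        have h1 : (θ1 • q + θ2 • c q.1).1 = q.1 := by
          simp only [hc, Prod.fst_add, Prod.smul_fst, smul_eq_mul]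
          linear_combination q.1 * hsum
        have h2 : (θ1 • q + θ2 • c q.1).2 = θ1 • q.2 + θ2 • ((q.1/T) • ψ y) := rfl
        exact Prod.ext h1 h2
      rw [hx2]
      exact hconv q.1 q.2 _ (by rwa [Prod.mk.eta]) (hcΩ q.1) θ1 θ2 hθ1 hθ2 hsum
    have hSeq : Ω = ⋃₀ {A | ∃ q ∈ Ω, A = segment ℝ q (c q.1) ∪ Set.range c} := by
      apply Set.Subset.antisymm
      · intro q hq
        exact ⟨_, ⟨q, hq, rfl⟩, Or.inl (left_mem_segment ℝ q (c q.1))⟩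
      · rintro x ⟨A, ⟨q, hq, rfl⟩, hx⟩
        rcases hx with hx | hx
        · exact hseg q hq hx
        · obtain ⟨a, rfl⟩ := hx; exact hcΩ a
    rw [hSeq]
    apply isPreconnected_sUnion (c 0)
    · rintro A ⟨q, hq, rfl⟩; exact Or.inr ⟨0, rfl⟩
    · rintro A ⟨q, hq, rfl⟩
      exact IsPreconnected.union (c q.1) (right_mem_segment ℝ q (c q.1)) ⟨q.1, rfl⟩
        (convex_segment _ _).isPreconnected hK
  have hcomp : connectedComponentIn Ω p = Ω :=
    Set.Subset.antisymm (connectedComponentIn_subset _ _)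
      (hpre.subset_connectedComponentIn hp (Set.Subset.refl _))
  rw [hcomp]
  apply Set.eq_univ_of_forall
  rintro ⟨a₀, b₀⟩
  set eb : Fin n → ℝ := b₀ - (a₀/T) • ψ y with heb
  set A : ℝ := |a₀| + 1 + (‖eb‖^2 * (δ + ε^2*T) * T) / (δ*ε^2) with hA
  have habs : 0 ≤ |a₀| := abs_nonneg _
  have hq0 : 0 ≤ (‖eb‖^2 * (δ + ε^2*T) * T) / (δ*ε^2) := by positivity
  have hA1 : 1 ≤ A := by rw [hA]; linarith
  have hApos : 0 < A := by linarith
  have hAgt : |a₀| < A := by rw [hA]; linarith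
  have hcond : ‖eb‖^2 * (δ + ε^2*T) * T < δ * ε^2 * (T + A^2) := by
    have hde : (0:ℝ) < δ*ε^2 := by positivity
    have h1 : (‖eb‖^2 * (δ + ε^2*T) * T) / (δ*ε^2) ≤ A := by rw [hA]; linarith
    have h2 : ‖eb‖^2 * (δ + ε^2*T) * T ≤ A * (δ*ε^2) := by
      rw [← div_le_iff₀ hde]; exact h1
    have h3 : A ≤ A^2 := by nlinarith
    nlinarith [mul_pos hde hTpos]
  have hP1 : ((A, (A/T) • ψ y + eb) : ℝ × (Fin n → ℝ)) ∈ Ω := keyA A eb hcond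
  have hP2 : ((-A, ((-A)/T) • ψ y + eb) : ℝ × (Fin n → ℝ)) ∈ Ω := by
    apply keyA (-A) eb
    rw [neg_sq]
    exact hcond
  set θ1 : ℝ := (A + a₀)/(2*A) with hθ1def
  set θ2 : ℝ := (A - a₀)/(2*A) with hθ2def
  have hA0 : A ≠ 0 := hApos.ne'
  have hθ1 : 0 ≤ θ1 := by
    apply div_nonneg _ (by linarith)
    have := abs_lt.mp hAgt
    linarith [this.1]
  have hθ2 : 0 ≤ θ2 := by
    apply div_nonneg _ (by linarith)
    have := abs_lt.mp hAgt
    linarith [this.2]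
  have hsum : θ1 + θ2 = 1 := by
    rw [hθ1def, hθ2def]
    field_simp
    ring
  apply segment_subset_convexHull hP1 hP2
  refine ⟨θ1, θ2, hθ1, hθ2, hsum, ?_⟩
  have hb₀ : b₀ = eb + (a₀/T) • ψ y := by rw [heb]; abel
  have hfst : (θ1 • ((A, (A/T) • ψ y + eb) : ℝ × (Fin n → ℝ))
      + θ2 • ((-A, ((-A)/T) • ψ y + eb) : ℝ × (Fin n → ℝ))).1 = a₀ := by
    simp only [Prod.fst_add, Prod.smul_fst, smul_eq_mul]
    rw [hθ1def, hθ2def]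
    field_simp
    ring
  have hsnd : (θ1 • ((A, (A/T) • ψ y + eb) : ℝ × (Fin n → ℝ))
      + θ2 • ((-A, ((-A)/T) • ψ y + eb) : ℝ × (Fin n → ℝ))).2 = b₀ := by
    simp only [Prod.snd_add, Prod.smul_snd]
    rw [hb₀, hθ1def, hθ2def]
    have hT0 : T ≠ 0 := hTpos.ne'
    match_scalars
    · field_simp
      ring
    · field_simp
      ring
  exact Prod.ext hfst hsnd
end

section
/- Let δ : ℝ^m → ℝ and h : ℝ^m → ℝⁿ be smooth, and let φ assign to each point of ℝ^m × ℝ × ℝ^k a linear map ℝ^m × ℝ × ℝ^k → ℝⁿ. Define g(x) = (1/(1 + ‖∇δ(x)‖²))·(dh(x)∇δ(x) - φ(x, δ(x), 0)(∇δ(x) - ∂_y)) and f₁(x, y, z) = h(x) + (y - δ(x))·g(x) + φ(x, y, z)(0, 0, z). Then f₁ restricted to A_δ equals (x, δ(x), 0) ↦ h(x), and at each point p = (x, δ(x), 0), the differential df₁(p) agrees with φ(p) on the orthogonal complement (T_p A_δ)^⊥ = span(∇δ(x) - ∂_y) ⊕ ℝ^k. -/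
open scoped RealInnerProductSpace

theorem stmt_18 (m k n : ℕ)
    (δ : EuclideanSpace ℝ (Fin m) → ℝ) (hδ : ContDiff ℝ (⊤ : ℕ∞) δ)
    (h : EuclideanSpace ℝ (Fin m) → EuclideanSpace ℝ (Fin n))
    (hh : ContDiff ℝ (⊤ : ℕ∞) h)
    (φ : (EuclideanSpace ℝ (Fin m) × ℝ × EuclideanSpace ℝ (Fin k)) →
      ((EuclideanSpace ℝ (Fin m) × ℝ × EuclideanSpace ℝ (Fin k)) →L[ℝ]
        EuclideanSpace ℝ (Fin n)))
    (hφ : ContDiff ℝ (⊤ : ℕ∞) φ)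
    (g : EuclideanSpace ℝ (Fin m) → EuclideanSpace ℝ (Fin n))
    (hg : g = fun x => (1 / (1 + ‖gradient δ x‖ ^ 2)) •
      (fderiv ℝ h x (gradient δ x) - φ (x, δ x, 0) (gradient δ x, -1, 0)))
    (f₁ : (EuclideanSpace ℝ (Fin m) × ℝ × EuclideanSpace ℝ (Fin k)) →
      EuclideanSpace ℝ (Fin n))
    (hf₁ : f₁ = fun p => h p.1 + (p.2.1 - δ p.1) • g p.1 + φ p (0, 0, p.2.2)) :
    (∀ x, f₁ (x, δ x, 0) = h x) ∧
    (∀ (x : EuclideanSpace ℝ (Fin m)) (c : ℝ) (z : EuclideanSpace ℝ (Fin k)),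
      fderiv ℝ f₁ (x, δ x, 0) (c • gradient δ x, -c, z) =
        φ (x, δ x, 0) (c • gradient δ x, -c, z)) := by
  have hgradδ : ContDiff ℝ (⊤ : ℕ∞) (fun x => gradient δ x) := by
    have h1 : ContDiff ℝ (⊤ : ℕ∞) (fderiv ℝ δ) := hδ.fderiv_right (by simp)
    have h2 : ContDiff ℝ (⊤ : ℕ∞) (fun y : EuclideanSpace ℝ (Fin m) →L[ℝ] ℝ =>
        (InnerProductSpace.toDual ℝ (EuclideanSpace ℝ (Fin m))).symm y) :=
      (InnerProductSpace.toDual ℝ (EuclideanSpace ℝ (Fin m))).symm.contDiff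
    exact h2.comp h1
  have hpos : ∀ y : EuclideanSpace ℝ (Fin m), (0:ℝ) < 1 + ‖gradient δ y‖ ^ 2 :=
    fun y => by positivity
  have hgsmooth : ContDiff ℝ (⊤ : ℕ∞) g := by
    rw [hg]
    have hsc : ContDiff ℝ (⊤ : ℕ∞)
        (fun y : EuclideanSpace ℝ (Fin m) => 1 / (1 + ‖gradient δ y‖ ^ 2)) := by
      apply contDiff_const.div
      · exact contDiff_const.add (hgradδ.norm_sq ℝ)
      · exact fun y => (hpos y).ne'
    have ht1 : ContDiff ℝ (⊤ : ℕ∞)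
        (fun y : EuclideanSpace ℝ (Fin m) => fderiv ℝ h y (gradient δ y)) :=
      (hh.fderiv_right (by simp)).clm_apply hgradδ
    have hφc : ContDiff ℝ (⊤ : ℕ∞)
        (fun y : EuclideanSpace ℝ (Fin m) => φ (y, δ y, 0)) :=
      hφ.comp (contDiff_id.prodMk (hδ.prodMk contDiff_const))
    have ht2 : ContDiff ℝ (⊤ : ℕ∞)
        (fun y : EuclideanSpace ℝ (Fin m) => φ (y, δ y, 0) (gradient δ y, -1, 0)) :=
      hφc.clm_apply (hgradδ.prodMk (contDiff_const.prodMk contDiff_const))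
    exact hsc.smul (ht1.sub ht2)
  have hgv : ∀ (y v : EuclideanSpace ℝ (Fin m)),
      fderiv ℝ δ y v = ⟪gradient δ y, v⟫ := by
    intro y v
    rw [gradient, InnerProductSpace.toDual_symm_apply]
  constructor
  · intro x
    simp [hf₁]
    exact map_zero _
  · intro x c z
    set p₀ : EuclideanSpace ℝ (Fin m) × ℝ × EuclideanSpace ℝ (Fin k) :=
      (x, δ x, 0) with hp₀
    have hA : HasFDerivAt (fun p : EuclideanSpace ℝ (Fin m) × ℝ × EuclideanSpace ℝ (Fin k) => h p.1)
        ((fderiv ℝ h x).comp (ContinuousLinearMap.fst ℝ (EuclideanSpace ℝ (Fin m)) (ℝ × EuclideanSpace ℝ (Fin k)))) p₀ :=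
      ((hh.differentiable (by simp) x).hasFDerivAt).comp p₀ hasFDerivAt_fst
    have hs : HasFDerivAt (fun p : EuclideanSpace ℝ (Fin m) × ℝ × EuclideanSpace ℝ (Fin k) => p.2.1 - δ p.1)
        (((ContinuousLinearMap.fst ℝ ℝ (EuclideanSpace ℝ (Fin k))).comp (ContinuousLinearMap.snd ℝ (EuclideanSpace ℝ (Fin m)) (ℝ × EuclideanSpace ℝ (Fin k)))) -
          (fderiv ℝ δ x).comp (ContinuousLinearMap.fst ℝ (EuclideanSpace ℝ (Fin m)) (ℝ × EuclideanSpace ℝ (Fin k)))) p₀ :=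
      (((ContinuousLinearMap.fst ℝ ℝ (EuclideanSpace ℝ (Fin k))).comp
        (ContinuousLinearMap.snd ℝ (EuclideanSpace ℝ (Fin m)) (ℝ × EuclideanSpace ℝ (Fin k)))).hasFDerivAt).sub
        (((hδ.differentiable (by simp) x).hasFDerivAt).comp p₀ hasFDerivAt_fst)
    have hG : HasFDerivAt (fun p : EuclideanSpace ℝ (Fin m) × ℝ × EuclideanSpace ℝ (Fin k) => g p.1)
        ((fderiv ℝ g x).comp (ContinuousLinearMap.fst ℝ (EuclideanSpace ℝ (Fin m)) (ℝ × EuclideanSpace ℝ (Fin k)))) p₀ :=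
      ((hgsmooth.differentiable (by simp) x).hasFDerivAt).comp p₀ hasFDerivAt_fst
    have hB := hs.smul hG
    set L : (EuclideanSpace ℝ (Fin m) × ℝ × EuclideanSpace ℝ (Fin k)) →L[ℝ]
        (EuclideanSpace ℝ (Fin m) × ℝ × EuclideanSpace ℝ (Fin k)) :=
      (0 : (EuclideanSpace ℝ (Fin m) × ℝ × EuclideanSpace ℝ (Fin k)) →L[ℝ] EuclideanSpace ℝ (Fin m)).prod
        ((0 : (EuclideanSpace ℝ (Fin m) × ℝ × EuclideanSpace ℝ (Fin k)) →L[ℝ] ℝ).prod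
          ((ContinuousLinearMap.snd ℝ ℝ (EuclideanSpace ℝ (Fin k))).comp
            (ContinuousLinearMap.snd ℝ (EuclideanSpace ℝ (Fin m)) (ℝ × EuclideanSpace ℝ (Fin k))))) with hL
    have hC : HasFDerivAt
        (fun p : EuclideanSpace ℝ (Fin m) × ℝ × EuclideanSpace ℝ (Fin k) => φ p (0, 0, p.2.2))
        ((φ p₀).comp L + (fderiv ℝ φ p₀).flip (L p₀)) p₀ :=
      ((hφ.differentiable (by simp) p₀).hasFDerivAt).clm_apply L.hasFDerivAt
    have htot := (hA.add hB).add hC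
    replace htot := htot.congr_of_eventuallyEq (Filter.EventuallyEq.of_eq (show f₁ = _ by rw [hf₁]; rfl))
    rw [htot.fderiv]
    have hLp₀ : L p₀ = 0 := by
      simp [hL, hp₀, Prod.ext_iff]
    simp only [ContinuousLinearMap.add_apply, ContinuousLinearMap.coe_comp',
      Function.comp_apply, ContinuousLinearMap.coe_fst',
      ContinuousLinearMap.smul_apply, ContinuousLinearMap.smulRight_apply,
      ContinuousLinearMap.coe_sub', Pi.sub_apply, ContinuousLinearMap.coe_snd',
      ContinuousLinearMap.flip_apply, hLp₀, map_zero, add_zero]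
    have hN : (1:ℝ) + ‖gradient δ x‖ ^ 2 ≠ 0 := (hpos x).ne'
    have hLv : L ((c • gradient δ x, -c, z) :
        EuclideanSpace ℝ (Fin m) × ℝ × EuclideanSpace ℝ (Fin k)) = (0, (0:ℝ), z) := rfl
    have hvec : ((c • gradient δ x, -c, z) :
        EuclideanSpace ℝ (Fin m) × ℝ × EuclideanSpace ℝ (Fin k)) =
        c • ((gradient δ x, (-1:ℝ), (0 : EuclideanSpace ℝ (Fin k))) :
          EuclideanSpace ℝ (Fin m) × ℝ × EuclideanSpace ℝ (Fin k)) +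
        ((0, (0:ℝ), z) : EuclideanSpace ℝ (Fin m) × ℝ × EuclideanSpace ℝ (Fin k)) := by
      simp [Prod.ext_iff, mul_comm]
    rw [hgv, real_inner_smul_right, real_inner_self_eq_norm_sq, hg, hLv, sub_self, zero_smul,
      zero_add]
    conv_rhs => rw [hvec]
    simp only [← hp₀]
    rw [map_add, (φ p₀).map_smul, (fderiv ℝ h x).map_smul]
    match_scalars <;> field_simp <;> ring
end
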